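/- arXiv:2506.05900 — 3 statements merged into one kernel-verified Lean document; each statement's English description precedes it below -/
import Mathlib

section
/- The total variation distance interestingness measure has sensitivity at least 1/2. Precisely: for every δ > 0 there exist a finite value domain V, a dataset D with a nonempty sub-multiset (cluster) D_c ⊆ D, an attribute A, and a tuple t, such that, writing D' = D + {t} and D_c' = D_c + {t}, one has |TVD(π_A(D'), π_A(D_c')) − TVD(π_A(D), π_A(D_c))| ≥ 1/2 − δ. (Moreover TVD always takes values in [0,1].) -/
/-
The dataset `(n + 1) • {false}` and its cluster `{false}` have the same distribution, so their
TVD is `0`. Adding a tuple `true` to both leaves the dataset almost all `false` but makes the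
cluster uniform on `{true, false}`: the TVD becomes `1/2 - 1/(n + 2)`, which tends to `1/2`.
The range bound holds since `|p a - q a| ≤ p a + q a` and each normalized count has total mass
at most `1` (mass `0` on the empty dataset, where division by zero gives `0`).
-/

noncomputable section

/-- `cntR A D a` is the number of tuples of the dataset (multiset) `D` whose
`A`-attribute value equals `a`, as a real number. -/
def cntR {T V : Type*} [DecidableEq V] (A : T → V) (D : Multiset T) (a : V) : ℝ :=
  ((D.map A).count a : ℝ)

/-- Total variation distance between the `A`-column value distributions of the
dataset `D` and the cluster `Dc`. -/
def TVD {T V : Type*} [Fintype V] [DecidableEq V] (A : T → V) (D Dc : Multiset T) : ℝ :=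
  (1 / 2) * ∑ a : V,
    |cntR A D a / (Multiset.card D : ℝ) - cntR A Dc a / (Multiset.card Dc : ℝ)|

section TVD

variable {T V : Type*} [DecidableEq V]

theorem sum_cntR [Fintype V] (A : T → V) (m : Multiset T) :
    ∑ a : V, cntR A m a = (Multiset.card m : ℝ) := by
  simp only [cntR]
  rw [← Nat.cast_sum, Multiset.sum_count_eq_card (fun a _ => Finset.mem_univ a),
    Multiset.card_map]

theorem sum_cntR_div_card_le_one [Fintype V] (A : T → V) (m : Multiset T) :
    ∑ a : V, cntR A m a / (Multiset.card m : ℝ) ≤ 1 := by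
  rw [← Finset.sum_div, sum_cntR]
  exact div_self_le_one _

theorem cntR_nonneg (A : T → V) (m : Multiset T) (a : V) : 0 ≤ cntR A m a :=
  Nat.cast_nonneg _

theorem TVD_nonneg [Fintype V] (A : T → V) (D Dc : Multiset T) : 0 ≤ TVD A D Dc :=
  mul_nonneg (by norm_num) (Finset.sum_nonneg fun _ _ => abs_nonneg _)

theorem TVD_le_one [Fintype V] (A : T → V) (D Dc : Multiset T) : TVD A D Dc ≤ 1 := by
  set p : V → ℝ := fun a => cntR A D a / (Multiset.card D : ℝ)
  set q : V → ℝ := fun a => cntR A Dc a / (Multiset.card Dc : ℝ)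
  have hp : ∀ a, 0 ≤ p a := fun a => div_nonneg (cntR_nonneg A D a) (Nat.cast_nonneg _)
  have hq : ∀ a, 0 ≤ q a := fun a => div_nonneg (cntR_nonneg A Dc a) (Nat.cast_nonneg _)
  calc TVD A D Dc = 1 / 2 * ∑ a, |p a - q a| := rfl
    _ ≤ 1 / 2 * ∑ a, (p a + q a) := by
      gcongr with a
      exact abs_sub_le_iff.2 ⟨by linarith [hq a], by linarith [hp a]⟩
    _ = 1 / 2 * (∑ a, p a + ∑ a, q a) := by rw [Finset.sum_add_distrib]
    _ ≤ 1 / 2 * (1 + 1) := by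
      gcongr
      · exact sum_cntR_div_card_le_one A D
      · exact sum_cntR_div_card_le_one A Dc
    _ = 1 := by norm_num

theorem cntR_nsmul (A : T → V) (k : ℕ) (m : Multiset T) (a : V) :
    cntR A (k • m) a = k * cntR A m a := by
  simp only [cntR, Multiset.map_nsmul, Multiset.count_nsmul, Nat.cast_mul]

theorem TVD_nsmul_left [Fintype V] (A : T → V) {k : ℕ} (hk : k ≠ 0) (D Dc : Multiset T) :
    TVD A (k • D) Dc = TVD A D Dc := by
  have hk' : (k : ℝ) ≠ 0 := Nat.cast_ne_zero.2 hk
  simp only [TVD, cntR_nsmul, Multiset.card_nsmul, Nat.cast_mul, mul_div_mul_left _ _ hk']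

theorem TVD_self [Fintype V] (A : T → V) (D : Multiset T) : TVD A D D = 0 := by
  simp [TVD]

end TVD

theorem TVD_replicate_false_singleton (n : ℕ) :
    TVD id (Multiset.replicate (n + 1) false) {false} = 0 := by
  rw [← Multiset.nsmul_singleton, TVD_nsmul_left _ n.succ_ne_zero, TVD_self]

theorem TVD_cons_true_replicate_false (n : ℕ) :
    TVD id (true ::ₘ Multiset.replicate (n + 1) false) (true ::ₘ {false}) =
      1 / 2 - 1 / (n + 2) := by
  have hn : (0 : ℝ) ≤ n := n.cast_nonneg
  have htrue : 1 / ((n : ℝ) + 2) ≤ 1 / 2 := one_div_le_one_div_of_le (by norm_num) (by linarith)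
  have hfalse : 1 / 2 ≤ ((n : ℝ) + 1) / (n + 2) := by
    rw [div_le_div_iff₀ (by norm_num) (by positivity)]
    linarith
  simp only [TVD, cntR, Fintype.sum_bool, Multiset.map_id, Multiset.card_cons,
    Multiset.card_replicate, Multiset.card_singleton, Multiset.count_cons_self,
    Multiset.count_cons_of_ne Bool.false_ne_true,
    Multiset.count_replicate_self, Multiset.count_replicate, Multiset.count_singleton_self,
    Multiset.count_singleton, if_neg (by decide : true ≠ false), if_neg Bool.false_ne_true]
  push_cast
  rw [show (n : ℝ) + 1 + 1 = n + 2 by ring, abs_of_nonpos (sub_nonpos.2 htrue),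
    abs_of_nonneg (sub_nonneg.2 hfalse)]
  field_simp
  ring

/-- The TVD interestingness measure has sensitivity at least `1/2`, and its range
is contained in `[0,1]`. -/
theorem tvd_high_sensitivity :
    (∀ δ : ℝ, 0 < δ →
      ∃ (T V : Type) (fV : Fintype V) (dV : DecidableEq V)
        (A : T → V) (D Dc : Multiset T) (t : T),
        Dc ≤ D ∧ Dc ≠ 0 ∧
        1 / 2 - δ ≤
          |@TVD T V fV dV A (t ::ₘ D) (t ::ₘ Dc) - @TVD T V fV dV A D Dc|) ∧
    (∀ (T V : Type) (fV : Fintype V) (dV : DecidableEq V)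
        (A : T → V) (D Dc : Multiset T), Dc ≤ D → Dc ≠ 0 →
        0 ≤ @TVD T V fV dV A D Dc ∧ @TVD T V fV dV A D Dc ≤ 1) := by
  refine ⟨fun δ hδ => ?_, fun T V _ _ A D Dc _ _ => ⟨TVD_nonneg A D Dc, TVD_le_one A D Dc⟩⟩
  obtain ⟨n, hn⟩ := exists_nat_one_div_lt hδ
  refine ⟨Bool, Bool, inferInstance, inferInstance, id, Multiset.replicate (n + 1) false, {false},
    true, Multiset.singleton_le.2 (by simp), by simp, ?_⟩
  rw [TVD_cons_true_replicate_false, TVD_replicate_false_singleton, sub_zero]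
  have hmono : 1 / ((n : ℝ) + 2) ≤ 1 / (n + 1) :=
    one_div_le_one_div_of_le (by positivity) (by linarith)
  linarith [le_abs_self (1 / 2 - 1 / ((n : ℝ) + 2))]
end
end

section
/- The global sufficiency measure Suf has sensitivity at least 1/2. Precisely: there exist a dataset D, a clustering function f into two labels, an attribute combination AC, and a tuple t₂, such that Suf(D, f, AC) = 1 while Suf(D + {t₂}, f, AC) = 1/2. (Moreover Suf always takes values in [0,1].) -/
noncomputable section

/-- The cluster of label `c`: the sub-multiset of tuples of `D` mapped to `c` by `f`. -/
def cl {T C : Type*} [DecidableEq C] (D : Multiset T) (f : T → C) (c : C) : Multiset T :=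
  D.filter (fun t => f t = c)

/-- `r(t, A) = cnt_{A=A(t)}(D_{f(t)}) / cnt_{A=A(t)}(D)`. -/
def rFun {T V C : Type*} [DecidableEq V] [DecidableEq C]
    (D : Multiset T) (f : T → C) (A : T → V) (t : T) : ℝ :=
  ((((cl D f (f t)).map A).count (A t) : ℝ)) / (((D.map A).count (A t) : ℝ))

/-- Local sufficiency of the attribute combination `AC` at tuple `t`:
`m^s_{AC}(t) = (Σ_{t'∈D, f(t')=f(t)} r(t', AC(f(t)))) / (Σ_{t'∈D} r(t', AC(f(t))))`. -/
def locSuf {T V C : Type*} [DecidableEq V] [DecidableEq C]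
    (D : Multiset T) (f : T → C) (AC : C → (T → V)) (t : T) : ℝ :=
  (((cl D f (f t)).map (rFun D f (AC (f t)))).sum) /
    ((D.map (rFun D f (AC (f t)))).sum)

/-- Global sufficiency: `Suf(D, f, AC) = (1/|D|) Σ_{t∈D} m^s_{AC}(t)`. -/
def Suf {T V C : Type*} [DecidableEq V] [DecidableEq C]
    (D : Multiset T) (f : T → C) (AC : C → (T → V)) : ℝ :=
  (1 / (Multiset.card D : ℝ)) * (D.map (locSuf D f AC)).sum

lemma rFun_nonneg {T V C : Type*} [DecidableEq V] [DecidableEq C]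
    (D : Multiset T) (f : T → C) (A : T → V) (t : T) : 0 ≤ rFun D f A t := by
  unfold rFun; positivity

lemma locSuf_mem {T V C : Type*} [DecidableEq V] [DecidableEq C]
    (D : Multiset T) (f : T → C) (AC : C → (T → V)) (t : T) :
    0 ≤ locSuf D f AC t ∧ locSuf D f AC t ≤ 1 := by
  set g := rFun D f (AC (f t))
  have hsub : cl D f (f t) ≤ D := Multiset.filter_le _ _
  obtain ⟨u, hu⟩ := Multiset.le_iff_exists_add.mp hsub
  have hnn : ∀ s : Multiset T, 0 ≤ (s.map g).sum := fun s =>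
    Multiset.sum_nonneg (by intro x hx; obtain ⟨y, _, rfl⟩ := Multiset.mem_map.mp hx
                            exact rFun_nonneg _ _ _ _)
  have hle : ((cl D f (f t)).map g).sum ≤ (D.map g).sum := by
    have heq : (D.map g).sum = ((cl D f (f t)).map g).sum + (u.map g).sum := by
      conv_lhs => rw [hu]
      rw [Multiset.map_add, Multiset.sum_add]
    rw [heq]; linarith [hnn u]
  constructor
  · exact div_nonneg (hnn _) (hnn _)
  · exact div_le_one_of_le₀ hle (hnn _)

lemma suf_mem {T V C : Type*} [DecidableEq V] [DecidableEq C]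
    (D : Multiset T) (f : T → C) (AC : C → (T → V)) :
    0 ≤ Suf D f AC ∧ Suf D f AC ≤ 1 := by
  unfold Suf
  have h0 : (0:ℝ) ≤ (D.map (locSuf D f AC)).sum :=
    Multiset.sum_nonneg (by intro x hx; obtain ⟨y, _, rfl⟩ := Multiset.mem_map.mp hx
                            exact (locSuf_mem D f AC y).1)
  have h1 : (D.map (locSuf D f AC)).sum ≤ (Multiset.card D : ℝ) := by
    have := Multiset.sum_le_card_nsmul (D.map (locSuf D f AC)) 1
      (by intro x hx; obtain ⟨y, _, rfl⟩ := Multiset.mem_map.mp hx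
          exact (locSuf_mem D f AC y).2)
    simpa using this
  constructor
  · positivity
  · rcases eq_or_ne (Multiset.card D) 0 with h | h
    · simp [Multiset.card_eq_zero.mp h]
    · rw [one_div, inv_mul_le_iff₀ (by positivity), mul_one]
      exact h1

/-- The global sufficiency measure `Suf` has sensitivity at least `1/2`: there are a
dataset `D`, a clustering into two labels, an attribute combination `AC`, and a tuple
`t₂` with `Suf(D) = 1` and `Suf(D + {t₂}) = 1/2`.  Moreover `Suf` always takes
values in `[0,1]`. -/
theorem suf_high_sensitivity :
    (∃ (T V : Type) (dV : DecidableEq V)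
        (D : Multiset T) (f : T → Fin 2) (AC : Fin 2 → (T → V)) (t₂ : T),
        @Suf T V (Fin 2) dV inferInstance D f AC = 1 ∧
        @Suf T V (Fin 2) dV inferInstance (t₂ ::ₘ D) f AC = 1 / 2) ∧
    (∀ (T V C : Type) [DecidableEq V] [DecidableEq C]
        (D : Multiset T) (f : T → C) (AC : C → (T → V)),
        0 ≤ Suf D f AC ∧ Suf D f AC ≤ 1) := by
  constructor
  · exact ⟨Bool, Unit, inferInstance, {false}, (fun b => if b then 1 else 0),
      (fun _ _ => ()), true, by
        simp [Suf, locSuf, rFun, cl, Multiset.filter_singleton, Multiset.filter_cons],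
      by
        simp [Suf, locSuf, rFun, cl, Multiset.filter_singleton, Multiset.filter_cons]
        norm_num⟩
  · intro T V C _ _ D f AC
    exact suf_mem D f AC
end
end

section
/- The low-sensitivity sufficiency function Suf_p has sensitivity at most 1 and range [0, |D_c|]. Precisely: (a) for every clustering function f : T → C, label c ∈ C, attribute A, dataset D and tuple t, writing D' = D + {t}, one has |Suf_p(D', f, c, A) − Suf_p(D, f, c, A)| ≤ 1; and (b) for every dataset D, 0 ≤ Suf_p(D, f, c, A) ≤ |D_c|, where D_c is the sub-multiset of tuples t of D with f(t) = c. -/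
noncomputable section

/-- Low-sensitivity sufficiency of attribute `A` for cluster `c`:
`Suf_p(D, f, c, A) = Σ_{a∈V : cnt_{A=a}(D_c) > 0} cnt_{A=a}(D_c)² / cnt_{A=a}(D)`. -/
def Sufp {T V C : Type*} [Fintype V] [DecidableEq V] [DecidableEq C]
    (D : Multiset T) (f : T → C) (c : C) (A : T → V) : ℝ :=
  ∑ a : V,
    if 0 < ((cl D f c).map A).count a then
      ((((cl D f c).map A).count a : ℝ)) ^ 2 / (((D.map A).count a : ℝ))
    else 0

lemma aux1 (n m : ℕ) (h : n ≤ m) :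
    |((n:ℝ)+1)^2/((m:ℝ)+1) - (if 0 < n then (n:ℝ)^2/m else 0)| ≤ 1 := by
  rcases Nat.eq_zero_or_pos n with hn | hn
  · subst hn
    simp only [lt_irrefl, if_false, sub_zero, Nat.cast_zero]
    rw [abs_of_nonneg (by positivity), div_le_one (by positivity)]
    norm_num
  · have hm : (0:ℝ) < m := by
      have : 0 < m := lt_of_lt_of_le hn h
      exact_mod_cast this
    have hn' : (n:ℝ) ≤ m := by exact_mod_cast h
    rw [if_pos hn]
    have hnonneg : (0:ℝ) ≤ ((n:ℝ)+1)^2/((m:ℝ)+1) - (n:ℝ)^2/m := by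
      rw [sub_nonneg, div_le_div_iff₀ hm (by positivity)]
      nlinarith
    rw [abs_of_nonneg hnonneg, div_sub_div _ _ (by positivity : ((m:ℝ)+1) ≠ 0) (ne_of_gt hm),
      div_le_one (by positivity)]
    nlinarith [sq_nonneg ((m:ℝ) - n)]

lemma aux2 (n m : ℕ) (h : n ≤ m) :
    |(if 0 < n then (n:ℝ)^2/((m:ℝ)+1) else 0) - (if 0 < n then (n:ℝ)^2/m else 0)| ≤ 1 := by
  rcases Nat.eq_zero_or_pos n with hn | hn
  · simp [hn]
  · have hm : (0:ℝ) < m := by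
      have : 0 < m := lt_of_lt_of_le hn h
      exact_mod_cast this
    have hn' : (n:ℝ) ≤ m := by exact_mod_cast h
    rw [if_pos hn, if_pos hn]
    have hnonpos : (n:ℝ)^2/((m:ℝ)+1) - (n:ℝ)^2/m ≤ 0 := by
      rw [sub_nonpos]
      exact div_le_div_of_nonneg_left (by positivity) hm (by linarith)
    rw [abs_of_nonpos hnonpos, neg_sub, div_sub_div _ _ (ne_of_gt hm) (by positivity),
      div_le_one (by positivity)]
    nlinarith

lemma sum_count_card {V : Type*} [Fintype V] [DecidableEq V] (s : Multiset V) :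
    ∑ a : V, s.count a = Multiset.card s := by
  rw [← Multiset.toFinset_sum_count_eq]
  exact (Finset.sum_subset (Finset.subset_univ _) (fun a _ ha => by
    simpa [Multiset.count_eq_zero] using ha)).symm

/-- `Suf_p` has sensitivity at most `1` and range `[0, |D_c|]`. -/
theorem sufp_sensitivity_and_range {T V C : Type*} [Fintype V] [DecidableEq V] [DecidableEq C]
    (f : T → C) (c : C) (A : T → V) :
    (∀ (D : Multiset T) (t : T), |Sufp (t ::ₘ D) f c A - Sufp D f c A| ≤ 1) ∧
    (∀ D : Multiset T,
      0 ≤ Sufp D f c A ∧ Sufp D f c A ≤ (Multiset.card (cl D f c) : ℝ)) := by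
  have hle : ∀ (D : Multiset T) (a : V),
      ((cl D f c).map A).count a ≤ ((D.map A).count a) := fun D a =>
    Multiset.count_le_of_le _ (Multiset.map_le_map (Multiset.filter_le _ _))
  constructor
  · intro D t
    set g : V → ℝ := fun a =>
      if 0 < ((cl D f c).map A).count a then
        ((((cl D f c).map A).count a : ℝ)) ^ 2 / (((D.map A).count a : ℝ))
      else 0 with hg
    set g' : V → ℝ := fun a =>
      if 0 < ((cl (t ::ₘ D) f c).map A).count a then
        ((((cl (t ::ₘ D) f c).map A).count a : ℝ)) ^ 2 / ((((t ::ₘ D).map A).count a : ℝ))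
      else 0 with hg'
    have hDm : ∀ a : V, (((t ::ₘ D).map A).count a)
        = ((D.map A).count a) + if a = A t then 1 else 0 := by
      intro a
      rw [Multiset.map_cons, Multiset.count_cons]
    have hclm : ∀ a : V, (((cl (t ::ₘ D) f c).map A).count a)
        = (((cl D f c).map A).count a) + if f t = c ∧ a = A t then 1 else 0 := by
      intro a
      by_cases hf : f t = c
      · rw [show cl (t ::ₘ D) f c = t ::ₘ cl D f c from Multiset.filter_cons_of_pos _ hf,
          Multiset.map_cons, Multiset.count_cons]
        simp [hf]
      · rw [show cl (t ::ₘ D) f c = cl D f c from Multiset.filter_cons_of_neg _ hf]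
        simp [hf]
    have hsum : Sufp (t ::ₘ D) f c A - Sufp D f c A = ∑ a : V, (g' a - g a) := by
      rw [Sufp, Sufp, ← Finset.sum_sub_distrib]
    rw [hsum, Finset.sum_eq_single (A t)]
    · by_cases hf : f t = c
      · have h1 : (((cl (t ::ₘ D) f c).map A).count (A t))
            = (((cl D f c).map A).count (A t)) + 1 := by rw [hclm]; simp [hf]
        have h2 : ((((t ::ₘ D)).map A).count (A t)) = ((D.map A).count (A t)) + 1 := by
          rw [hDm]; simp
        have := aux1 (((cl D f c).map A).count (A t)) (((D.map A).count (A t)))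
          (hle D (A t))
        simp only [hg, hg', h1, h2]
        simpa [Nat.cast_add] using this
      · have h1 : (((cl (t ::ₘ D) f c).map A).count (A t))
            = (((cl D f c).map A).count (A t)) := by rw [hclm]; simp [hf]
        have h2 : ((((t ::ₘ D)).map A).count (A t)) = ((D.map A).count (A t)) + 1 := by
          rw [hDm]; simp
        have := aux2 (((cl D f c).map A).count (A t)) (((D.map A).count (A t)))
          (hle D (A t))
        simp only [hg, hg', h1, h2]
        simpa [Nat.cast_add] using this
    · intro b _ hb
      have h1 : (((cl (t ::ₘ D) f c).map A).count b) = (((cl D f c).map A).count b) := by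
        rw [hclm]; simp [hb]
      have h2 : ((((t ::ₘ D)).map A).count b) = ((D.map A).count b) := by
        rw [hDm]; simp [hb]
      simp only [hg, hg', h1, h2, sub_self]
    · intro h; exact absurd (Finset.mem_univ _) h
  · intro D
    constructor
    · apply Finset.sum_nonneg
      intro a _
      split
      · positivity
      · exact le_refl 0
    · have key : Sufp D f c A ≤ ∑ a : V, (((cl D f c).map A).count a : ℝ) := by
        apply Finset.sum_le_sum
        intro a _
        split
        · rename_i hn
          have hm : 0 < ((D.map A).count a) := lt_of_lt_of_le hn (hle D a)
          have hmr : (0:ℝ) < ((D.map A).count a) := by exact_mod_cast hm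
          rw [div_le_iff₀ hmr, sq]
          have hcast : (((cl D f c).map A).count a : ℝ) ≤ ((D.map A).count a : ℝ) := by
            exact_mod_cast hle D a
          nlinarith [Nat.cast_nonneg (α := ℝ) (((cl D f c).map A).count a)]
        · positivity
      calc Sufp D f c A ≤ ∑ a : V, (((cl D f c).map A).count a : ℝ) := key
        _ = (Multiset.card (cl D f c) : ℝ) := by
            rw [← Nat.cast_sum, sum_count_card, Multiset.card_map]
end
end
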